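/- Let Ω_c = ℝⁿ∖(Ω∪Ω_I). Let u, v : ℝⁿ → ℝ be measurable, square-integrable functions with u = 0 and v = 0 almost everywhere on ℝⁿ∖Ω. Then ∬_{Ω_c×ℝⁿ} |(u(y)−u(x))·(v(y)−v(x))|/|y−x|^{n+2s} dy dx ≤ (n·ωₙ/(2·s·λ^{2s}))·‖u‖_{L²(Ω)}·‖v‖_{L²(Ω)}. -/

import Mathlib

open MeasureTheory Real Set

noncomputable section

abbrev Eucl (n : ℕ) := EuclideanSpace ℝ (Fin n)

/-- `ωₙ`, the Lebesgue measure of the unit ball of `ℝⁿ`. -/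
def unitBallVol (n : ℕ) : ℝ := (volume (Metric.ball (0 : Eucl n) 1)).toReal

/-- The interaction domain `Ω_I = {y ∈ ℝⁿ∖Ω : |y−x| < λ for some x ∈ Ω}`. -/
def interDom {n : ℕ} (Ω : Set (Eucl n)) (lam : ℝ) : Set (Eucl n) :=
  {y | y ∉ Ω ∧ ∃ x ∈ Ω, ‖y - x‖ < lam}

/-- The `L²(Ω)` norm. -/
def L2NormOn {n : ℕ} (Ω : Set (Eucl n)) (v : Eucl n → ℝ) : ℝ :=
  Real.sqrt (∫ x in Ω, v x ^ 2)

/-!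
Outside `Ω ∪ Ω_I`, which is the `λ`-thickening of `Ω`, both `u` and `v` vanish, so the integrand
at `(x, y)` is `|u(y) v(y)| / |y - x|^{n+2s}`, nonzero only for `y ∈ Ω`, hence for `|y - x| ≥ λ`.
It is therefore dominated by `|u(y) v(y)| k(y - x)` with `k(z) = |z|^{-(n+2s)} 1_{|z| ≥ λ}`.
Tonelli and translation invariance turn the integral of this bound into `‖u v‖₁ ‖k‖₁`; polar
coordinates give `‖k‖₁ = n ωₙ λ^{-2s} / (2s)`, and Cauchy–Schwarz gives `‖u v‖₁ ≤ ‖u‖₂ ‖v‖₂`.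
-/

open Module Metric
open scoped ENNReal

def tailKernel (lam r : ℝ) : ℝ → ℝ := (Ici lam).indicator fun t => t ^ (-r)

lemma tailKernel_nonneg (lam r t : ℝ) (hlam : 0 ≤ lam) : 0 ≤ tailKernel lam r t :=
  indicator_nonneg (fun _ ht => rpow_nonneg (hlam.trans ht) _) t

lemma measurable_tailKernel (lam r : ℝ) : Measurable (tailKernel lam r) :=
  (measurable_id.pow_const _).indicator measurableSet_Ici

section Radial

variable {α lam : ℝ}

lemma pow_smul_tailKernel_eqOn {d : ℕ} (hd : 1 ≤ d) (α lam : ℝ) :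
    EqOn (fun y : ℝ => y ^ (d - 1) • tailKernel lam (d + α) y)
      ((Ici lam).indicator fun y => y ^ (-1 - α)) (Ioi 0) := by
  intro y (hy : 0 < y)
  by_cases h : y ∈ Ici lam
  · simp only [tailKernel, indicator_of_mem h, smul_eq_mul]
    rw [← rpow_natCast, ← rpow_add hy, Nat.cast_sub hd, Nat.cast_one]
    ring_nf
  · simp [tailKernel, indicator_of_notMem h]

lemma integrableOn_Ioi_indicator_Ici_rpow (hα : 0 < α) (hlam : 0 < lam) :
    IntegrableOn ((Ici lam).indicator fun y : ℝ => y ^ (-1 - α)) (Ioi 0) :=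
  ((integrableOn_Ici_iff_integrableOn_Ioi).2 (integrableOn_Ioi_rpow_of_lt (by linarith) hlam)
    ).integrable_indicator measurableSet_Ici |>.integrableOn

lemma integral_Ioi_indicator_Ici_rpow (hα : 0 < α) (hlam : 0 < lam) :
    ∫ y in Ioi (0 : ℝ), (Ici lam).indicator (fun y : ℝ => y ^ (-1 - α)) y = lam ^ (-α) / α := by
  rw [setIntegral_indicator measurableSet_Ici,
    inter_eq_right.2 (Ici_subset_Ioi.2 hlam), integral_Ici_eq_integral_Ioi,
    integral_Ioi_rpow_of_lt (by linarith) hlam, show -1 - α + 1 = -α by ring, neg_div_neg_eq]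

variable {E : Type*} [NormedAddCommGroup E] [NormedSpace ℝ E] [FiniteDimensional ℝ E]
  [MeasurableSpace E] [BorelSpace E] [Nontrivial E] (μ : Measure E) [μ.IsAddHaarMeasure]

lemma integrable_tailKernel_norm (hα : 0 < α) (hlam : 0 < lam) :
    Integrable (fun x : E => tailKernel lam (finrank ℝ E + α) ‖x‖) μ := by
  rw [integrable_fun_norm_addHaar μ (f := tailKernel lam (finrank ℝ E + α)),
    integrableOn_congr_fun (pow_smul_tailKernel_eqOn finrank_pos α lam) measurableSet_Ioi]
  exact integrableOn_Ioi_indicator_Ici_rpow hα hlam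

lemma integral_tailKernel_norm (hα : 0 < α) (hlam : 0 < lam) :
    ∫ x, tailKernel lam (finrank ℝ E + α) ‖x‖ ∂μ
      = finrank ℝ E * μ.real (ball 0 1) * (lam ^ (-α) / α) := by
  rw [integral_fun_norm_addHaar μ (tailKernel lam (finrank ℝ E + α)),
    setIntegral_congr_fun measurableSet_Ioi (pow_smul_tailKernel_eqOn finrank_pos α lam),
    integral_Ioi_indicator_Ici_rpow hα hlam, nsmul_eq_mul, smul_eq_mul, mul_assoc]

lemma lintegral_tailKernel_norm (hα : 0 < α) (hlam : 0 < lam) :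
    ∫⁻ x, ENNReal.ofReal (tailKernel lam (finrank ℝ E + α) ‖x‖) ∂μ
      = ENNReal.ofReal (finrank ℝ E * μ.real (ball 0 1) * (lam ^ (-α) / α)) := by
  rw [← ofReal_integral_eq_lintegral_ofReal (integrable_tailKernel_norm μ hα hlam)
    (.of_forall fun x => tailKernel_nonneg _ _ _ hlam.le), integral_tailKernel_norm μ hα hlam]

end Radial

lemma lintegral_prod_mul_comp_sub {G : Type*} [MeasurableSpace G] [AddGroup G] [MeasurableAdd₂ G]
    [MeasurableNeg G] (μ : Measure G) [SFinite μ] [μ.IsAddLeftInvariant] [μ.IsNegInvariant]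
    {a k : G → ℝ≥0∞} (ha : Measurable a) (hk : Measurable k) :
    ∫⁻ p, a p.2 * k (p.2 - p.1) ∂μ.prod μ = (∫⁻ y, a y ∂μ) * ∫⁻ z, k z ∂μ := by
  rw [lintegral_prod_symm' (fun p => a p.2 * k (p.2 - p.1)) (by fun_prop),
    ← lintegral_mul_const _ ha]
  congr 1 with y
  exact (lintegral_const_mul _ (by fun_prop)).trans
    (congrArg (a y * ·) (lintegral_sub_left_eq_self k y))

lemma lintegral_abs_mul_le {X : Type*} [MeasurableSpace X] {μ : Measure X} {u v : X → ℝ}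
    (hu : AEMeasurable u μ) (hv : AEMeasurable v μ)
    (hu2 : Integrable (fun x => u x ^ 2) μ) (hv2 : Integrable (fun x => v x ^ 2) μ) :
    ∫⁻ x, ENNReal.ofReal |u x * v x| ∂μ
      ≤ ENNReal.ofReal (√(∫ x, u x ^ 2 ∂μ) * √(∫ x, v x ^ 2 ∂μ)) := by
  have hL2 : ∀ f : X → ℝ, Integrable (fun x => f x ^ 2) μ →
      (∫⁻ x, ENNReal.ofReal |f x| ^ (2 : ℝ) ∂μ) ^ (1 / 2 : ℝ)
        = ENNReal.ofReal √(∫ x, f x ^ 2 ∂μ) := by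
    intro f hf2
    simp_rw [ENNReal.ofReal_rpow_of_nonneg (abs_nonneg _) zero_le_two, rpow_two, sq_abs]
    rw [← ofReal_integral_eq_lintegral_ofReal hf2 (.of_forall fun x => sq_nonneg _),
      ENNReal.ofReal_rpow_of_nonneg (integral_nonneg fun x => sq_nonneg _) (by norm_num),
      sqrt_eq_rpow]
  calc ∫⁻ x, ENNReal.ofReal |u x * v x| ∂μ
      = ∫⁻ x, ENNReal.ofReal |u x| * ENNReal.ofReal |v x| ∂μ := by
        simp_rw [abs_mul, ENNReal.ofReal_mul (abs_nonneg _)]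
    _ ≤ (∫⁻ x, ENNReal.ofReal |u x| ^ (2 : ℝ) ∂μ) ^ (1 / 2 : ℝ) *
        (∫⁻ x, ENNReal.ofReal |v x| ^ (2 : ℝ) ∂μ) ^ (1 / 2 : ℝ) :=
        ENNReal.lintegral_mul_le_Lp_mul_Lq μ HolderConjugate.two_two hu.abs.ennreal_ofReal
          hv.abs.ennreal_ofReal
    _ = _ := by rw [hL2 u hu2, hL2 v hv2, ENNReal.ofReal_mul (sqrt_nonneg _)]

section Kernel

variable {E : Type*} [NormedAddCommGroup E] {Ω : Set E} {lam : ℝ} {u v : E → ℝ}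

lemma abs_mul_sub_div_rpow_le_tailKernel {x y : E} (hx : x ∉ thickening lam Ω) (hux : u x = 0)
    (hvx : v x = 0) (huy : y ∉ Ω → u y = 0) (r : ℝ) :
    |(u y - u x) * (v y - v x)| / ‖y - x‖ ^ r ≤ |u y * v y| * tailKernel lam r ‖y - x‖ := by
  rw [hux, hvx, sub_zero, sub_zero]
  by_cases hy : y ∈ Ω
  · have hxy : lam ≤ ‖y - x‖ := by
      rw [← dist_eq_norm, dist_comm]
      by_contra! h
      exact hx (mem_thickening_iff.2 ⟨y, hy, h⟩)
    rw [tailKernel, indicator_of_mem (mem_Ici.2 hxy), rpow_neg (norm_nonneg _), div_eq_mul_inv]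
  · simp [huy hy]

variable [NormedSpace ℝ E] [FiniteDimensional ℝ E] [MeasurableSpace E] [BorelSpace E]
  [Nontrivial E] (μ : Measure E) [μ.IsAddHaarMeasure]

theorem setIntegral_compl_thickening_prod_le {α : ℝ} (hlam : 0 < lam) (hα : 0 < α)
    (hu : Measurable u) (hv : Measurable v)
    (hu2 : Integrable (fun x => u x ^ 2) μ) (hv2 : Integrable (fun x => v x ^ 2) μ)
    (hu0 : ∀ᵐ x ∂μ, x ∉ Ω → u x = 0) (hv0 : ∀ᵐ x ∂μ, x ∉ Ω → v x = 0) :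
    ∫ p in (thickening lam Ω)ᶜ ×ˢ univ,
        |(u p.2 - u p.1) * (v p.2 - v p.1)| / ‖p.2 - p.1‖ ^ ((finrank ℝ E : ℝ) + α) ∂μ.prod μ ≤
      finrank ℝ E * μ.real (ball 0 1) / (α * lam ^ α) *
        √(∫ x, u x ^ 2 ∂μ) * √(∫ x, v x ^ 2 ∂μ) := by
  set r : ℝ := finrank ℝ E + α
  set k : E → ℝ := fun z => tailKernel lam r ‖z‖
  have hS : MeasurableSet ((thickening lam Ω)ᶜ ×ˢ (univ : Set E)) :=
    isOpen_thickening.measurableSet.compl.prod .univ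
  have hdom : ∫⁻ p in (thickening lam Ω)ᶜ ×ˢ univ,
        ENNReal.ofReal (|(u p.2 - u p.1) * (v p.2 - v p.1)| / ‖p.2 - p.1‖ ^ r) ∂μ.prod μ ≤
      ∫⁻ p, ENNReal.ofReal |u p.2 * v p.2| * ENNReal.ofReal (k (p.2 - p.1)) ∂μ.prod μ := by
    refine (lintegral_mono_ae ?_).trans (setLIntegral_le_lintegral _ _)
    filter_upwards [ae_restrict_mem hS,
      ae_restrict_of_ae (Measure.quasiMeasurePreserving_fst.ae hu0),
      ae_restrict_of_ae (Measure.quasiMeasurePreserving_fst.ae hv0),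
      ae_restrict_of_ae (Measure.quasiMeasurePreserving_snd.ae hu0)] with p hp hux hvx huy
    have hx : p.1 ∉ Ω := fun h => hp.1 (self_subset_thickening hlam Ω h)
    rw [← ENNReal.ofReal_mul (abs_nonneg _)]
    exact ENNReal.ofReal_le_ofReal
      (abs_mul_sub_div_rpow_le_tailKernel hp.1 (hux hx) (hvx hx) huy r)
  rw [integral_eq_lintegral_of_nonneg_ae
    (.of_forall fun p => div_nonneg (abs_nonneg _) (rpow_nonneg (norm_nonneg _) _))
    (Measurable.aestronglyMeasurable (by fun_prop))]
  refine ENNReal.toReal_le_of_le_ofReal (by positivity) ?_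
  calc _ ≤ _ := hdom
    _ = (∫⁻ y, ENNReal.ofReal |u y * v y| ∂μ) * ∫⁻ z, ENNReal.ofReal (k z) ∂μ :=
        lintegral_prod_mul_comp_sub μ (a := fun y => ENNReal.ofReal |u y * v y|) (by fun_prop)
          (ENNReal.measurable_ofReal.comp ((measurable_tailKernel lam r).comp measurable_norm))
    _ ≤ ENNReal.ofReal (√(∫ x, u x ^ 2 ∂μ) * √(∫ x, v x ^ 2 ∂μ)) *
          ENNReal.ofReal (finrank ℝ E * μ.real (ball 0 1) * (lam ^ (-α) / α)) := by
        rw [lintegral_tailKernel_norm μ hα hlam]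
        gcongr
        exact lintegral_abs_mul_le hu.aemeasurable hv.aemeasurable hu2 hv2
    _ = _ := by
        rw [← ENNReal.ofReal_mul (by positivity), rpow_neg hlam.le]
        congr 1
        field_simp

end Kernel

lemma union_interDom_eq_thickening {n : ℕ} (Ω : Set (Eucl n)) {lam : ℝ} (hlam : 0 < lam) :
    Ω ∪ interDom Ω lam = thickening lam Ω := by
  ext y
  simp only [interDom, mem_union, mem_ofPred_eq, mem_thickening_iff, dist_eq_norm]
  by_cases hy : y ∈ Ω
  · exact iff_of_true (.inl hy) ⟨y, hy, by simpa using hlam⟩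
  · simp [hy]

lemma L2NormOn_eq_sqrt_integral {n : ℕ} {Ω : Set (Eucl n)} {v : Eucl n → ℝ}
    (hv0 : ∀ᵐ x ∂volume, x ∉ Ω → v x = 0) : L2NormOn Ω v = √(∫ x, v x ^ 2) := by
  rw [L2NormOn, setIntegral_eq_integral_of_ae_compl_eq_zero]
  filter_upwards [hv0] with x hx hxΩ
  rw [hx hxΩ, sq, mul_zero]

theorem stmt7_general (n : ℕ) (hn : 1 ≤ n) (s : ℝ) (hs : s ∈ Set.Ioo (0 : ℝ) 1)
    (Ω : Set (Eucl n)) (lam : ℝ) (hlam : 0 < lam)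
    (u v : Eucl n → ℝ) (hu : Measurable u) (hv : Measurable v)
    (hu2 : Integrable (fun x => u x ^ 2)) (hv2 : Integrable (fun x => v x ^ 2))
    (hu0 : ∀ᵐ x ∂volume, x ∉ Ω → u x = 0) (hv0 : ∀ᵐ x ∂volume, x ∉ Ω → v x = 0) :
    ∫ p in ((Ω ∪ interDom Ω lam)ᶜ ×ˢ (Set.univ : Set (Eucl n))),
        |(u p.2 - u p.1) * (v p.2 - v p.1)| / ‖p.2 - p.1‖ ^ ((n : ℝ) + 2 * s) ≤
      (n : ℝ) * unitBallVol n / (2 * s * lam ^ (2 * s)) * L2NormOn Ω u * L2NormOn Ω v := by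
  have : Nontrivial (Eucl n) :=
    Module.nontrivial_of_finrank_pos (R := ℝ) (by rw [finrank_euclideanSpace_fin]; omega)
  have hbound := setIntegral_compl_thickening_prod_le (volume : Measure (Eucl n)) hlam
    (mul_pos two_pos hs.1) hu hv hu2 hv2 hu0 hv0
  rw [finrank_euclideanSpace_fin] at hbound
  rwa [union_interDom_eq_thickening Ω hlam, Measure.volume_eq_prod, unitBallVol,
    ← measureReal_def, L2NormOn_eq_sqrt_integral hu0, L2NormOn_eq_sqrt_integral hv0]

/-- Let `Ω_c = ℝⁿ∖(Ω∪Ω_I)`. For measurable, square-integrable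
`u, v : ℝⁿ → ℝ` vanishing a.e. off `Ω`,
`∬_{Ω_c×ℝⁿ} |(u(y)−u(x))·(v(y)−v(x))|/|y−x|^{n+2s} dy dx
  ≤ (n·ωₙ/(2·s·λ^{2s}))·‖u‖_{L²(Ω)}·‖v‖_{L²(Ω)}`. -/
theorem stmt7 (n : ℕ) (hn : 1 ≤ n) (s : ℝ) (hs : s ∈ Set.Ioo (0 : ℝ) 1)
    (Ω : Set (Eucl n)) (hΩne : Ω.Nonempty) (hΩo : IsOpen Ω) (hΩb : Bornology.IsBounded Ω)
    (lam : ℝ) (hlam : 0 < lam)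
    (u v : Eucl n → ℝ) (hu : Measurable u) (hv : Measurable v)
    (hu2 : Integrable (fun x => u x ^ 2)) (hv2 : Integrable (fun x => v x ^ 2))
    (hu0 : ∀ᵐ x ∂volume, x ∉ Ω → u x = 0) (hv0 : ∀ᵐ x ∂volume, x ∉ Ω → v x = 0) :
    ∫ p in ((Ω ∪ interDom Ω lam)ᶜ ×ˢ (Set.univ : Set (Eucl n))),
        |(u p.2 - u p.1) * (v p.2 - v p.1)| / ‖p.2 - p.1‖ ^ ((n : ℝ) + 2 * s) ≤
      (n : ℝ) * unitBallVol n / (2 * s * lam ^ (2 * s)) * L2NormOn Ω u * L2NormOn Ω v :=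
  stmt7_general n hn s hs Ω lam hlam u v hu hv hu2 hv2 hu0 hv0
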